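/- Let q ≥ 3 and n ≥ 3. For every w ∈ A_q(n) and every w' ∈ A_q(n) ∪ B_q(n), no nonempty proper prefix of w is equal to a suffix of w'. -/

import Mathlib

/-- Value of a letter: 1 ↦ +1, 0 ↦ -1, other letters ↦ 0. -/
def mval (a : ℕ) : ℤ := if a = 1 then 1 else if a = 0 then -1 else 0

/-- Value-sum of a word. -/
def vsum (w : List ℕ) : ℤ := (w.map mval).sum

/-- A (q-2)-colored Motzkin word over the alphabet Z_q = {0,...,q-1}:
all letters < q, every prefix has nonnegative value-sum, total value-sum 0. -/
def IsMotzkinWord (q : ℕ) (w : List ℕ) : Prop :=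
  (∀ a ∈ w, a < q) ∧ (∀ u, u <+: w → 0 ≤ vsum u) ∧ vsum w = 0

/-- The set 𝓜_{q-2}(n) of (q-2)-colored Motzkin words of length n. -/
def MotzkinSet (q n : ℕ) : Set (List ℕ) := {w | w.length = n ∧ IsMotzkinWord q w}

/-- M_{q-2}(n), the number of (q-2)-colored Motzkin words of length n. -/
noncomputable def Mnum (q n : ℕ) : ℕ := (MotzkinSet q n).ncard

/-- The set Ê_{q-2}(n) of elevated (q-2)-colored Motzkin words of length n:
words 1α0 with α ∈ 𝓜_{q-2}(n-2). -/
def ElevatedSet (q n : ℕ) : Set (List ℕ) :=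
  {w | w.length = n ∧ ∃ α ∈ MotzkinSet q (n - 2), w = 1 :: (α ++ [0])}

/-- The set A_q(n). -/
def SetA (q n : ℕ) : Set (List ℕ) :=
  {w | ∃ i ≤ n / 2, ∃ α ∈ MotzkinSet q i, ∃ β ∈ ElevatedSet q (n - i), w = α ++ β} \
    {w | ∃ α ∈ ElevatedSet q (n / 2), ∃ β ∈ ElevatedSet q (n / 2), w = α ++ β}

/-- The set B_q(n). -/
def SetB (q n : ℕ) : Set (List ℕ) :=
  {w | ∃ i ≤ n / 2 - 1, ∃ α ∈ MotzkinSet q i, ∃ β ∈ ElevatedSet q (n - i - 1),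
    w = 1 :: (α ++ β)}

/-- The set C_q(n): words γ0 with γ a (q-2)-colored Motzkin word of length n-1
having no factor which is an elevated Motzkin word of length j ≥ ⌈n/2⌉. -/
def SetC (q n : ℕ) : Set (List ℕ) :=
  {w | ∃ γ ∈ MotzkinSet q (n - 1),
    (∀ j, (n + 1) / 2 ≤ j → ∀ β ∈ ElevatedSet q j, ¬ β <:+: γ) ∧ w = γ ++ [0]}

/-- The cross-bifix-free candidate set CBFS_q(n). -/
def CBFS (q n : ℕ) : Set (List ℕ) := SetA q n ∪ SetB q n ∪ SetC q n

/-- A word is bifix-free if no nonempty proper prefix of it is also a suffix of it. -/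
def BifixFree (w : List ℕ) : Prop :=
  ∀ u, u <+: w → u ≠ [] → u.length < w.length → ¬ u <:+ w

/-- BF_q(n): the set of bifix-free words of length n over Z_q. -/
def BF (q n : ℕ) : Set (List ℕ) := {w | w.length = n ∧ (∀ a ∈ w, a < q) ∧ BifixFree w}

/-- F_{k,q}(n): the number of words of length n over Z_q avoiding k consecutive 0's. -/
noncomputable def Fcount (k q n : ℕ) : ℕ :=
  {w : List ℕ | w.length = n ∧ (∀ a ∈ w, a < q) ∧ ¬ List.replicate k 0 <:+: w}.ncard

/-- The set S_{k,q}(n) of Bajic--Stojanovic--Chee--Kiah type words: words s of length n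
over Z_q with s₁ = ⋯ = s_k = 0, s_{k+1} ≠ 0, s_n ≠ 0, and such that the subword
s_{k+2} ⋯ s_{n-1} contains no k consecutive 0's. -/
def SetS (q k n : ℕ) : Set (List ℕ) :=
  {s | s.length = n ∧ (∀ a ∈ s, a < q) ∧ s.take k = List.replicate k 0 ∧
    s.getD k 0 ≠ 0 ∧ s.getLast? ≠ some 0 ∧
    ¬ List.replicate k 0 <:+: (s.drop (k + 1)).take (n - k - 2)}

/-!
Every word of A_q(n) is a Motzkin path αβ with β elevated, and so is the part α'β' of a word of
A_q(n) ∪ B_q(n) that can carry a proper suffix. A word u that is a prefix of αβ and a suffix of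
α'β' therefore has height both ≥ 0 and ≤ 0, hence 0. Elevated words return to height 0 only at
their end, so u lies inside α and contains β'. Since |α| ≤ n/2 ≤ |β'|, this forces
u = α = β' ∈ Ê(n/2) and then β ∈ Ê(n/2): these are exactly the words removed from A_q(n).
-/

@[simp] lemma vsum_nil : vsum [] = 0 := rfl

@[simp] lemma vsum_cons (a : ℕ) (w : List ℕ) : vsum (a :: w) = mval a + vsum w := by
  simp [vsum]

@[simp] lemma vsum_append (v w : List ℕ) : vsum (v ++ w) = vsum v + vsum w := by
  simp [vsum]

def IsBalanced (w : List ℕ) : Prop := (∀ u, u <+: w → 0 ≤ vsum u) ∧ vsum w = 0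

def IsElevated (e : List ℕ) : Prop := ∃ γ, IsBalanced γ ∧ e = 1 :: (γ ++ [0])

lemma IsMotzkinWord.isBalanced {q : ℕ} {w : List ℕ} (h : IsMotzkinWord q w) : IsBalanced w :=
  h.2

lemma isElevated_of_mem_elevatedSet {q m : ℕ} {e : List ℕ} (he : e ∈ ElevatedSet q m) :
    IsElevated e := by
  obtain ⟨-, γ, hγ, rfl⟩ := he
  exact ⟨γ, hγ.2.isBalanced, rfl⟩

namespace IsBalanced

variable {α u w : List ℕ}

lemma vsum_nonpos_of_suffix (hw : IsBalanced w) (hu : u <:+ w) : vsum u ≤ 0 := by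
  obtain ⟨p, rfl⟩ := hu
  have := hw.1 p (List.prefix_append p u)
  linarith [hw.2, vsum_append p u]

lemma append (hα : IsBalanced α) (hw : IsBalanced w) : IsBalanced (α ++ w) := by
  refine ⟨fun u hu => ?_, by simp [hα.2, hw.2]⟩
  rcases le_total u.length α.length with hle | hle
  · exact hα.1 u (List.prefix_of_prefix_length_le hu (List.prefix_append α w) hle)
  · obtain ⟨v, rfl⟩ := List.prefix_of_prefix_length_le (List.prefix_append α w) hu hle
    rw [List.prefix_append_right_inj] at hu
    simpa [hα.2] using hw.1 v hu

end IsBalanced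

namespace IsElevated

variable {α e u v : List ℕ}

lemma vsum_pos_of_prefix (he : IsElevated e) (hv : v <+: e) (hne : v ≠ [])
    (hlt : v.length < e.length) : 0 < vsum v := by
  obtain ⟨γ, hγ, rfl⟩ := he
  obtain ⟨t, rfl, ht⟩ := (List.prefix_cons_iff.mp hv).resolve_left hne
  rcases List.prefix_concat_iff.mp ht with rfl | htγ
  · simp at hlt
  · have := hγ.1 t htγ
    simp only [vsum_cons, mval, if_pos]
    omega

lemma isBalanced (he : IsElevated e) : IsBalanced e := by
  refine ⟨fun v hv => ?_, ?_⟩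
  · rcases eq_or_ne v [] with rfl | hne
    · simp
    rcases (List.IsPrefix.length_le hv).lt_or_eq with hlt | hlen
    · exact (he.vsum_pos_of_prefix hv hne hlt).le
    · rw [hv.eq_of_length hlen]
      obtain ⟨γ, hγ, rfl⟩ := he
      simp [hγ.2, mval]
  · obtain ⟨γ, hγ, rfl⟩ := he
    simp [hγ.2, mval]

lemma prefix_of_prefix_append (hα : IsBalanced α) (he : IsElevated e) (hu : u <+: α ++ e)
    (h0 : vsum u = 0) (hlt : u.length < (α ++ e).length) : u <+: α := by
  rcases le_total u.length α.length with hle | hle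
  · exact List.prefix_of_prefix_length_le hu (List.prefix_append α e) hle
  obtain ⟨v, rfl⟩ := List.prefix_of_prefix_length_le (List.prefix_append α e) hu hle
  rw [List.prefix_append_right_inj] at hu
  rcases eq_or_ne v [] with rfl | hne
  · simp
  have := he.vsum_pos_of_prefix hu hne (by simpa using hlt)
  simp only [vsum_append, hα.2, zero_add] at h0
  omega

lemma suffix_of_suffix_append (hα : IsBalanced α) (he : IsElevated e) (hu : u <:+ α ++ e)
    (hne : u ≠ []) (h0 : 0 ≤ vsum u) : e <:+ u := by
  obtain ⟨p, hp⟩ := hu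
  have hp0 : vsum p = 0 := by
    have := (hα.append he.isBalanced).1 p ⟨u, hp⟩
    have := congrArg vsum hp
    simp only [vsum_append, hα.2, he.isBalanced.2, add_zero] at this
    omega
  have hplt : p.length < (α ++ e).length := by
    rw [← hp, List.length_append]
    exact Nat.lt_add_of_pos_right (List.length_pos_iff.mpr hne)
  obtain ⟨t, rfl⟩ := prefix_of_prefix_append hα he ⟨u, hp⟩ hp0 hplt
  rw [List.append_assoc, List.append_cancel_left_eq] at hp
  exact ⟨t, hp.symm⟩

end IsElevated

lemma exists_suffix_balanced_append_elevated {q n : ℕ} (hn : 2 ≤ n) {w' u : List ℕ}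
    (hw' : w' ∈ SetA q n ∪ SetB q n) (hu : u <:+ w') (hlt : u.length < n) :
    ∃ α' e' m, IsBalanced α' ∧ e' ∈ ElevatedSet q m ∧ n ≤ m + n / 2 ∧ u <:+ α' ++ e' := by
  rcases hw' with ⟨⟨i, hi, α', hα', e', he', rfl⟩, -⟩ | ⟨i, hi, α', hα', e', he', rfl⟩
  · exact ⟨α', e', n - i, hα'.2.isBalanced, he', by omega, hu⟩
  · refine ⟨α', e', n - i - 1, hα'.2.isBalanced, he', by omega, ?_⟩
    refine (List.suffix_cons_iff.mp hu).resolve_left fun h => ?_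
    have := congrArg List.length h
    simp only [List.length_cons, List.length_append, hα'.1, he'.1] at this
    omega

theorem setA_vs_setAB_no_cross_bifix_general (q n : ℕ) (hn : 3 ≤ n)
    (w w' : List ℕ) (hw : w ∈ SetA q n) (hw' : w' ∈ SetA q n ∪ SetB q n) :
    ∀ u, u <+: w → u ≠ [] → u.length < w.length → ¬ u <:+ w' := by
  intro u hpre hne hlt hsuf
  obtain ⟨⟨i, hi, α, hα, β, hβ, rfl⟩, hnot⟩ := hw
  have hαl : α.length = i := hα.1
  have hlen : (α ++ β).length = n := by simp only [List.length_append, hαl, hβ.1]; omega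
  obtain ⟨α', β', m, hα', hβ', hm, hsuf'⟩ :=
    exists_suffix_balanced_append_elevated (by omega) hw' hsuf (by omega)
  have hβ'l : β'.length = m := hβ'.1
  have hβe := isElevated_of_mem_elevatedSet hβ
  have hβe' := isElevated_of_mem_elevatedSet hβ'
  have h0 : vsum u = 0 :=
    le_antisymm ((hα'.append hβe'.isBalanced).vsum_nonpos_of_suffix hsuf')
      ((hα.2.isBalanced.append hβe.isBalanced).1 u hpre)
  have huα : u <+: α := hβe.prefix_of_prefix_append hα.2.isBalanced hpre h0 hlt
  have hβ'u : β' <:+ u := hβe'.suffix_of_suffix_append hα' hsuf' hne h0.ge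
  have hu_le := huα.length_le
  have hβ'_le := hβ'u.length_le
  obtain rfl : u = α := huα.eq_of_length (by omega)
  obtain rfl : β' = u := hβ'u.eq_of_length (by omega)
  obtain rfl : m = n / 2 := by omega
  exact hnot ⟨β', hβ', β, by rwa [show n / 2 = n - i by omega], rfl⟩

/-- For w ∈ A_q(n) and w' ∈ A_q(n) ∪ B_q(n), no nonempty proper prefix of
w equals a suffix of w'. -/
theorem setA_vs_setAB_no_cross_bifix (q n : ℕ) (hq : 3 ≤ q) (hn : 3 ≤ n)
    (w w' : List ℕ) (hw : w ∈ SetA q n) (hw' : w' ∈ SetA q n ∪ SetB q n) :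
    ∀ u, u <+: w → u ≠ [] → u.length < w.length → ¬ u <:+ w' :=
  setA_vs_setAB_no_cross_bifix_general q n hn w w' hw hw'
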